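/- Let d ≥ 1 and let (ν_ε)_{ε>0} be a family of admissible measures on ℝ^d. For each ε > 0 let R_ε ∈ [1,∞] (with R_ε = ∞ allowed, in which case min(1, R_ε|x|) = 1 for x ≠ 0), set C_ε = ∫_{ℝ^d} min(1, R_ε|x|) ν_ε(dx), assume 0 < C_ε < ∞, and let λ_ε(dx) = C_ε^{−1} min(1, R_ε|x|) ν_ε(dx), a probability measure. Assume that for every R > 0, λ_ε({x : |x| > R}) → 1 as ε → 0⁺. Let E ⊂ ℝ^d be a Borel set of finite Lebesgue measure whose covariance function g_E is Lipschitz continuous (this holds whenever E also has finite classical perimeter). Then lim_{ε→0⁺} C_ε^{−1} Per_{ν_ε}(E) = |E|. -/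

import Mathlib

/-!
By Tonelli, `Per_ν(E) = ∫ (|E| - g_E(y)) ν(dy)`, hence
`C⁻¹ Per_ν(E) = ∫ (|E| - g_E(y)) / min(1, R|y|) λ(dy)`. Since `g_E` is Lipschitz with
`g_E(0) = |E|`, the integrand is bounded by `max(|E|, Lip g_E)` uniformly in `ε`; for `|y| ≥ 1`
the weight equals `1` and the integrand is `|E| - g_E(y)`, which tends to `|E|` at infinity
because `g_E` tends to `0`. As the probability measures `λ_ε` concentrate at infinity, the
integrals tend to `|E|`.
-/

open MeasureTheory Filter Topology ENNReal NNReal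

/-- The non-local `ν`-perimeter: `Per_ν(E) = ∫_E ν(Eᶜ − x) dx`. -/
noncomputable def nuPer {d : ℕ} (ν : Measure (EuclideanSpace ℝ (Fin d)))
    (E : Set (EuclideanSpace ℝ (Fin d))) : ℝ≥0∞ :=
  ∫⁻ x in E, ν {y | x + y ∈ Eᶜ}

/-- The covariance function `g_E(y) = |E ∩ (E + y)|` of a set `E`. -/
noncomputable def covFn {d : ℕ} (E : Set (EuclideanSpace ℝ (Fin d)))
    (y : EuclideanSpace ℝ (Fin d)) : ℝ≥0∞ :=
  volume (E ∩ {x | x - y ∈ E})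

theorem tendsto_lintegral_of_concentrate {ι α : Type*} [MeasurableSpace α] {l : Filter ι}
    {μ : ι → Measure α} {f : ι → α → ℝ≥0∞} {a M : ℝ≥0∞} (hM : M ≠ ∞)
    (hprob : ∀ᶠ i in l, IsProbabilityMeasure (μ i)) (hbound : ∀ᶠ i in l, ∀ x, f i x ≤ M)
    (hconc : ∀ δ : ℝ≥0, 0 < δ → ∃ K, MeasurableSet K ∧ Tendsto (fun i => μ i K) l (𝓝 1) ∧
      ∀ᶠ i in l, ∀ x ∈ K, a ≤ f i x + δ ∧ f i x ≤ a + δ) :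
    Tendsto (fun i => ∫⁻ x, f i x ∂μ i) l (𝓝 a) := by
  refine tendsto_order.2 ⟨fun b hb => ?_, fun b hb => ?_⟩
  · obtain ⟨δ, hδ, hbδ⟩ := ENNReal.lt_iff_exists_add_pos_lt.1 hb
    obtain ⟨K, hK, hμK, hfK⟩ := hconc δ hδ
    have hlim : Tendsto (fun i => a * μ i K) l (𝓝 a) := by
      simpa using ENNReal.Tendsto.const_mul hμK (Or.inl one_ne_zero)
    filter_upwards [hlim.eventually (lt_mem_nhds hbδ), hprob, hfK] with i hi _ hfK
    have hlow : a * μ i K ≤ ∫⁻ x, f i x ∂μ i + δ :=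
      calc a * μ i K = ∫⁻ _ in K, a ∂μ i := (setLIntegral_const K a).symm
        _ ≤ ∫⁻ x in K, (f i x + δ) ∂μ i :=
          lintegral_mono_ae (ae_restrict_of_forall_mem hK fun x hx => (hfK x hx).1)
        _ = ∫⁻ x in K, f i x ∂μ i + δ * μ i K := by
          rw [lintegral_add_right _ measurable_const, setLIntegral_const]
        _ ≤ ∫⁻ x, f i x ∂μ i + δ :=
          add_le_add (setLIntegral_le_lintegral _ _) (mul_le_of_le_one_right' prob_le_one)
    exact (ENNReal.add_lt_add_iff_right coe_ne_top).1 (hi.trans_le hlow)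
  · obtain ⟨δ, hδ, haδ⟩ := ENNReal.lt_iff_exists_add_pos_lt.1 hb
    obtain ⟨K, hK, hμK, hfK⟩ := hconc δ hδ
    have hcompl : Tendsto (fun i => μ i Kᶜ) l (𝓝 0) := by
      have h := ENNReal.Tendsto.sub tendsto_const_nhds hμK (Or.inl one_ne_top)
      rw [tsub_self] at h
      refine h.congr' ?_
      filter_upwards [hprob] with i _ using (prob_compl_eq_one_sub hK).symm
    have hlim : Tendsto (fun i => (a + δ) * μ i K + M * μ i Kᶜ) l (𝓝 (a + δ)) := by
      simpa using (ENNReal.Tendsto.const_mul hμK (Or.inl one_ne_zero)).add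
        (ENNReal.Tendsto.const_mul hcompl (Or.inr hM))
    filter_upwards [hlim.eventually (gt_mem_nhds haδ), hbound, hfK] with i hi hfM hfK
    refine lt_of_le_of_lt ?_ hi
    calc ∫⁻ x, f i x ∂μ i = ∫⁻ x in K, f i x ∂μ i + ∫⁻ x in Kᶜ, f i x ∂μ i :=
          (lintegral_add_compl _ hK).symm
      _ ≤ ∫⁻ _ in K, (a + δ) ∂μ i + ∫⁻ _ in Kᶜ, M ∂μ i :=
          add_le_add (lintegral_mono_ae (ae_restrict_of_forall_mem hK fun x hx => (hfK x hx).2))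
            (lintegral_mono fun x => hfM x)
      _ = (a + δ) * μ i K + M * μ i Kᶜ := by rw [setLIntegral_const, setLIntegral_const]

theorem sFinite_of_lintegral_ne_top {α : Type*} [MeasurableSpace α] {μ : Measure α}
    {f : α → ℝ≥0∞} (hf : AEMeasurable f μ) (hf0 : ∀ᵐ x ∂μ, f x ≠ 0) (hfin : ∫⁻ x, f x ∂μ ≠ ∞) :
    SFinite μ :=
  have := isFiniteMeasure_withDensity hfin
  sFinite_of_absolutelyContinuous (withDensity_absolutelyContinuous' hf hf0)

theorem tendsto_measure_norm_gt_atTop {E : Type*} [NormedAddCommGroup E] [MeasurableSpace E]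
    [CompleteSpace E] [SecondCountableTopology E] [BorelSpace E] (μ : Measure E)
    [IsFiniteMeasure μ] : Tendsto (fun r : ℝ => μ {x | r < ‖x‖}) atTop (𝓝 0) := by
  simpa using tendsto_measure_norm_gt_of_isTightMeasureSet (isTightMeasureSet_singleton (μ := μ))

theorem isProbabilityMeasure_inv_smul_withDensity {α : Type*} [MeasurableSpace α]
    (μ : Measure α) {w : α → ℝ≥0∞} (h0 : ∫⁻ x, w x ∂μ ≠ 0) (htop : ∫⁻ x, w x ∂μ ≠ ∞) :
    IsProbabilityMeasure ((∫⁻ x, w x ∂μ)⁻¹ • μ.withDensity w) := by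
  constructor
  rw [Measure.smul_apply, smul_eq_mul, withDensity_apply _ MeasurableSet.univ,
    Measure.restrict_univ, ENNReal.inv_mul_cancel h0 htop]

section Euclidean

variable {d : ℕ}

local notation "V" => EuclideanSpace ℝ (Fin d)

theorem covFn_zero (E : Set V) : covFn E 0 = volume E := by
  simp [covFn]

theorem covFn_le_volume (E : Set V) (y : V) : covFn E y ≤ volume E :=
  measure_mono Set.inter_subset_left

theorem covFn_neg (E : Set V) (y : V) : covFn E (-y) = covFn E y := by
  have h : E ∩ {x | x - y ∈ E} = (· - y) ⁻¹' (E ∩ {x | x - -y ∈ E}) := by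
    ext x
    simp only [Set.mem_inter_iff, Set.mem_preimage, Set.mem_ofPred_eq, sub_neg_eq_add,
      sub_add_cancel]
    exact and_comm
  rw [covFn, covFn, h]
  simpa only [sub_eq_add_neg] using (measure_preimage_add_right volume (-y) _).symm

theorem covFn_le_two_mul_volume_inter_norm_gt (E : Set V) {r : ℝ} {y : V} (hy : 2 * r < ‖y‖) :
    covFn E y ≤ 2 * volume (E ∩ {x | r < ‖x‖}) := by
  set F := E ∩ {x : V | r < ‖x‖}
  have hsub : E ∩ {x | x - y ∈ E} ⊆ F ∪ (· - y) ⁻¹' F := by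
    rintro x ⟨hx, hxy⟩
    by_contra! h
    simp only [Set.mem_union, Set.mem_preimage, Set.mem_inter_iff, Set.mem_ofPred_eq, F,
      not_or, not_and, not_lt] at h
    have : ‖y‖ ≤ ‖x‖ + ‖x - y‖ := by simpa using norm_sub_le x (x - y)
    linarith [h.1 hx, h.2 hxy]
  calc covFn E y ≤ volume (F ∪ (· - y) ⁻¹' F) := measure_mono hsub
    _ ≤ volume F + volume ((· - y) ⁻¹' F) := measure_union_le _ _
    _ = 2 * volume F := by simp only [measure_preimage_add_right, sub_eq_add_neg, two_mul]

theorem tendsto_covFn_cobounded {E : Set V} (hE : MeasurableSet E) (hEvol : volume E ≠ ∞) :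
    Tendsto (covFn E) (Bornology.cobounded V) (𝓝 0) := by
  have : Fact (volume E < ∞) := ⟨hEvol.lt_top⟩
  have hr : Tendsto (fun y : V => (‖y‖ - 1) / 2) (Bornology.cobounded V) atTop :=
    (tendsto_atTop_add_const_right _ (-1) tendsto_norm_cobounded_atTop).atTop_div_const two_pos
  have htail := ENNReal.Tendsto.const_mul
    ((tendsto_measure_norm_gt_atTop (volume.restrict E)).comp hr) (Or.inr (ofNat_ne_top (n := 2)))
  rw [mul_zero] at htail
  refine tendsto_of_tendsto_of_tendsto_of_le_of_le tendsto_const_nhds htail (fun _ => zero_le)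
    fun y => (covFn_le_two_mul_volume_inter_norm_gt E (r := (‖y‖ - 1) / 2) (by linarith)).trans ?_
  rw [Function.comp_apply, Measure.restrict_apply' hE, Set.inter_comm]

theorem volume_sub_covFn_le {E : Set V} (hEvol : volume E ≠ ∞) {L : ℝ≥0}
    (hLip : LipschitzWith L fun y => (covFn E y).toReal) (y : V) :
    volume E - covFn E y ≤ L * ‖y‖₊ := by
  have hfin : covFn E y ≠ ∞ := ne_top_of_le_ne_top hEvol (covFn_le_volume E y)
  calc volume E - covFn E y
      = ENNReal.ofReal ((covFn E 0).toReal - (covFn E y).toReal) := by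
        rw [ENNReal.ofReal_sub _ toReal_nonneg, ofReal_toReal hfin, covFn_zero,
          ofReal_toReal hEvol]
    _ ≤ ENNReal.ofReal (dist (covFn E 0).toReal (covFn E y).toReal) :=
        ofReal_le_ofReal ((le_abs_self _).trans (Real.dist_eq _ _).ge)
    _ ≤ ENNReal.ofReal (L * dist 0 y) := ofReal_le_ofReal (hLip.dist_le_mul 0 y)
    _ = L * ‖y‖₊ := by
        rw [dist_zero_left, ENNReal.ofReal_mul L.coe_nonneg, ofReal_coe_nnreal, ofReal_norm,
          enorm_eq_nnnorm]

noncomputable def truncScaledNorm (R : ℝ≥0∞) (y : V) : ℝ≥0∞ := min 1 (R * ‖y‖₊)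

theorem measurable_truncScaledNorm (R : ℝ≥0∞) : Measurable (truncScaledNorm (d := d) R) := by
  unfold truncScaledNorm
  fun_prop

theorem truncScaledNorm_le_one (R : ℝ≥0∞) (y : V) : truncScaledNorm R y ≤ 1 := min_le_left _ _

theorem truncScaledNorm_ne_zero {R : ℝ≥0∞} (hR : R ≠ 0) {y : V} (hy : y ≠ 0) :
    truncScaledNorm R y ≠ 0 := by
  simp [truncScaledNorm, hR, hy]

theorem truncScaledNorm_eq_one {R : ℝ≥0∞} (hR : 1 ≤ R) {y : V} (hy : 1 ≤ ‖y‖) :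
    truncScaledNorm R y = 1 := by
  refine min_eq_left (one_le_mul hR ?_)
  exact_mod_cast hy

theorem min_one_le_truncScaledNorm {R : ℝ≥0∞} (hR : 1 ≤ R) (y : V) :
    min 1 (‖y‖₊ : ℝ≥0∞) ≤ truncScaledNorm R y :=
  min_le_min le_rfl (le_mul_of_one_le_left zero_le hR)

theorem ae_truncScaledNorm_ne_zero {ν : Measure V} (hν0 : ν {0} = 0) {R : ℝ≥0∞} (hR : R ≠ 0) :
    ∀ᵐ y ∂ν, truncScaledNorm R y ≠ 0 :=
  measure_mono_null (fun _ hy => by_contra fun h => hy (truncScaledNorm_ne_zero hR h)) hν0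

theorem nuPer_eq_lintegral_volume_sub_covFn (ν : Measure V) [SFinite ν] {E : Set V}
    (hE : MeasurableSet E) (hEvol : volume E ≠ ∞) :
    nuPer ν E = ∫⁻ y, (volume E - covFn E y) ∂ν := by
  have hS : MeasurableSet {p : V × V | p.1 + p.2 ∈ Eᶜ} :=
    hE.compl.preimage (measurable_fst.add measurable_snd)
  calc nuPer ν E = (volume.restrict E).prod ν {p : V × V | p.1 + p.2 ∈ Eᶜ} :=
        (Measure.prod_apply hS).symm
    _ = ∫⁻ y, volume (E \ {x | x + y ∈ E}) ∂ν := by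
        rw [Measure.prod_apply_symm hS]
        refine lintegral_congr fun y => ?_
        rw [Measure.restrict_apply' hE, Set.inter_comm]
        rfl
    _ = ∫⁻ y, (volume E - covFn E y) ∂ν := by
        refine lintegral_congr fun y => ?_
        have hT : MeasurableSet {x : V | x + y ∈ E} := hE.preimage (measurable_add_const y)
        rw [← Set.sdiff_self_inter, measure_sdiff Set.inter_subset_left
          (hE.inter hT).nullMeasurableSet
          (ne_top_of_le_ne_top hEvol (measure_mono Set.inter_subset_left)), ← covFn_neg]
        simp [covFn]

theorem inv_mul_nuPer_eq_lintegral (ν : Measure V) [SFinite ν] (hν0 : ν {0} = 0) {R : ℝ≥0∞}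
    (hR : R ≠ 0) (c : ℝ≥0∞) {E : Set V} (hE : MeasurableSet E) (hEvol : volume E ≠ ∞) :
    c⁻¹ * nuPer ν E = ∫⁻ y, (volume E - covFn E y) / truncScaledNorm R y
      ∂(c⁻¹ • ν.withDensity (truncScaledNorm R)) := by
  rw [lintegral_smul_measure, smul_eq_mul, lintegral_withDensity_eq_lintegral_mul_non_measurable
    _ (measurable_truncScaledNorm R)
    (ae_of_all _ fun y => (truncScaledNorm_le_one R y).trans_lt one_lt_top),
    nuPer_eq_lintegral_volume_sub_covFn ν hE hEvol]
  congr 1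
  refine lintegral_congr_ae ?_
  filter_upwards [ae_truncScaledNorm_ne_zero hν0 hR] with y hy
  rw [Pi.mul_apply, ENNReal.mul_div_cancel hy
    ((truncScaledNorm_le_one R y).trans_lt one_lt_top).ne]

theorem volume_sub_covFn_div_truncScaledNorm_le {E : Set V} (hEvol : volume E ≠ ∞) {L : ℝ≥0}
    (hLip : LipschitzWith L fun y => (covFn E y).toReal) {R : ℝ≥0∞} (hR : 1 ≤ R) (y : V) :
    (volume E - covFn E y) / truncScaledNorm R y ≤ max (volume E) L := by
  refine ENNReal.div_le_of_le_mul ((?_ : _ ≤ max (volume E) L * min 1 (‖y‖₊ : ℝ≥0∞)).trans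
    (mul_le_mul_right (min_one_le_truncScaledNorm hR y) _))
  rcases le_total 1 (‖y‖₊ : ℝ≥0∞) with hy | hy
  · rw [min_eq_left hy, mul_one]
    exact tsub_le_self.trans (le_max_left _ _)
  · rw [min_eq_right hy]
    exact (volume_sub_covFn_le hEvol hLip y).trans (mul_le_mul_left (le_max_right _ _) _)

end Euclidean

theorem statement10_general {d : ℕ}
    (ν : ℝ → Measure (EuclideanSpace ℝ (Fin d)))
    (hν0 : ∀ ε > (0 : ℝ), ν ε {0} = 0)
    (Rε : ℝ → ℝ≥0∞) (hRε : ∀ ε > (0 : ℝ), 1 ≤ Rε ε)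
    (C : ℝ → ℝ≥0∞)
    (hC : ∀ ε, C ε = ∫⁻ x, min 1 (Rε ε * (‖x‖₊ : ℝ≥0∞)) ∂(ν ε))
    (hCpos : ∀ ε > (0 : ℝ), 0 < C ε) (hCfin : ∀ ε > (0 : ℝ), C ε < ⊤)
    (lam : ℝ → Measure (EuclideanSpace ℝ (Fin d)))
    (hlam : ∀ ε, lam ε =
      (C ε)⁻¹ • (ν ε).withDensity fun x => min 1 (Rε ε * (‖x‖₊ : ℝ≥0∞)))
    (htail : ∀ R > (0 : ℝ),
      Tendsto (fun ε => lam ε {x | R < ‖x‖}) (𝓝[>] (0 : ℝ)) (𝓝 1))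
    (E : Set (EuclideanSpace ℝ (Fin d)))
    (hE : MeasurableSet E) (hEvol : volume E < ⊤)
    (hLip : ∃ L : ℝ≥0, LipschitzWith L fun y => (covFn E y).toReal) :
    Tendsto (fun ε => (C ε)⁻¹ * nuPer (ν ε) E) (𝓝[>] (0 : ℝ))
      (𝓝 (volume E)) := by
  obtain ⟨L, hL⟩ := hLip
  have hpos : ∀ᶠ ε in 𝓝[>] (0 : ℝ), 0 < ε := self_mem_nhdsWithin
  have hR0 : ∀ ε > (0 : ℝ), Rε ε ≠ 0 := fun ε hε => (one_pos.trans_le (hRε ε hε)).ne'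
  have hlamC : ∀ ε, lam ε = (C ε)⁻¹ • (ν ε).withDensity (truncScaledNorm (Rε ε)) := hlam
  refine (tendsto_lintegral_of_concentrate (μ := lam) (M := max (volume E) L)
    (f := fun ε y => (volume E - covFn E y) / truncScaledNorm (Rε ε) y)
    (max_ne_top hEvol.ne coe_ne_top) ?_ ?_ ?_).congr' ?_
  · filter_upwards [hpos] with ε hε
    rw [hlamC, hC]
    exact isProbabilityMeasure_inv_smul_withDensity _ (hC ε ▸ (hCpos ε hε).ne')
      (hC ε ▸ (hCfin ε hε).ne)
  · filter_upwards [hpos] with ε hε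
    exact volume_sub_covFn_div_truncScaledNorm_le hEvol.ne hL (hRε ε hε)
  · intro δ hδ
    obtain ⟨r, -, hr⟩ := hasBasis_cobounded_norm.eventually_iff.1
      ((tendsto_covFn_cobounded hE hEvol.ne).eventually (eventually_le_nhds (coe_pos.2 hδ)))
    refine ⟨{y | max r 1 < ‖y‖}, measurableSet_lt measurable_const measurable_norm,
      htail _ (lt_max_of_lt_right one_pos), ?_⟩
    filter_upwards [hpos] with ε hε y hy
    have hy' : max r 1 < ‖y‖ := hy
    rw [truncScaledNorm_eq_one (hRε ε hε) ((le_max_right r 1).trans hy'.le), div_one]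
    exact ⟨le_tsub_add.trans (add_le_add le_rfl (hr ((le_max_left r 1).trans hy'.le))),
      tsub_le_self.trans le_self_add⟩
  · filter_upwards [hpos] with ε hε
    have : SFinite (ν ε) := sFinite_of_lintegral_ne_top
      (measurable_truncScaledNorm (Rε ε)).aemeasurable
      (ae_truncScaledNorm_ne_zero (hν0 ε hε) (hR0 ε hε)) (hC ε ▸ (hCfin ε hε).ne)
    rw [hlamC, inv_mul_nuPer_eq_lintegral (ν ε) (hν0 ε hε) (hR0 ε hε) (C ε) hE hEvol.ne]

/-- Convergence of the scaled non-local perimeter towards the Lebesgue measure when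
the normalized measures `λ_ε(dx) = C_ε⁻¹ min(1, R_ε|x|) ν_ε(dx)` concentrate at
infinity:  `C_ε⁻¹ Per_{ν_ε}(E) → |E|` for any Borel set `E` of finite Lebesgue measure
with Lipschitz covariance function. -/
theorem statement10 {d : ℕ} (hd : 1 ≤ d)
    (ν : ℝ → Measure (EuclideanSpace ℝ (Fin d)))
    (hν0 : ∀ ε > (0 : ℝ), ν ε {0} = 0)
    (hadm : ∀ ε > (0 : ℝ), (∫⁻ x, ENNReal.ofReal (min 1 ‖x‖) ∂(ν ε)) < ⊤)
    (Rε : ℝ → ℝ≥0∞) (hRε : ∀ ε > (0 : ℝ), 1 ≤ Rε ε)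
    (C : ℝ → ℝ≥0∞)
    (hC : ∀ ε, C ε = ∫⁻ x, min 1 (Rε ε * (‖x‖₊ : ℝ≥0∞)) ∂(ν ε))
    (hCpos : ∀ ε > (0 : ℝ), 0 < C ε) (hCfin : ∀ ε > (0 : ℝ), C ε < ⊤)
    (lam : ℝ → Measure (EuclideanSpace ℝ (Fin d)))
    (hlam : ∀ ε, lam ε =
      (C ε)⁻¹ • (ν ε).withDensity fun x => min 1 (Rε ε * (‖x‖₊ : ℝ≥0∞)))
    (htail : ∀ R > (0 : ℝ),
      Tendsto (fun ε => lam ε {x | R < ‖x‖}) (𝓝[>] (0 : ℝ)) (𝓝 1))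
    (E : Set (EuclideanSpace ℝ (Fin d)))
    (hE : MeasurableSet E) (hEvol : volume E < ⊤)
    (hLip : ∃ L : ℝ≥0, LipschitzWith L fun y => (covFn E y).toReal) :
    Tendsto (fun ε => (C ε)⁻¹ * nuPer (ν ε) E) (𝓝[>] (0 : ℝ))
      (𝓝 (volume E)) :=
  statement10_general ν hν0 Rε hRε C hC hCpos hCfin lam hlam htail E hE hEvol hLip
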